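/- For any normed plane, 1/2 ≤ c_D(‖·‖) ≤ 1. -/

import Mathlib

open Module

variable {V : Type*} [NormedAddCommGroup V] [NormedSpace ℝ V]

noncomputable def sine {V : Type*} [NormedAddCommGroup V] [NormedSpace ℝ V] (x y : V) : ℝ :=
  ⨅ t : ℝ, ‖x + t • y‖

def BOrth {V : Type*} [NormedAddCommGroup V] [NormedSpace ℝ V] (x y : V) : Prop :=
  ∀ t : ℝ, ‖x‖ ≤ ‖x + t • y‖

noncomputable def cD (V : Type*) [NormedAddCommGroup V] [NormedSpace ℝ V] : ℝ :=
  sInf {r : ℝ | ∃ x y : V, ‖x‖ = 1 ∧ ‖y‖ = 1 ∧ BOrth x y ∧ r = sine y x}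

noncomputable def cR (V : Type*) [NormedAddCommGroup V] [NormedSpace ℝ V] : ℝ :=
  sSup {r : ℝ | ∃ x y : V, ‖x‖ = 1 ∧ ‖y‖ = 1 ∧ r = |sine x y - sine y x|}

/-!
Every value `s(y, x)` with `x ⊣_B y` lies in `[‖y‖ / 2, ‖y‖]`. The upper bound is the choice
`t = 0` in the infimum. For the lower bound, homogeneity gives `t • x ⊣_B y`, so
`‖y + t • x‖ ≥ ‖t • x‖`, while the triangle inequality gives `‖y + t • x‖ ≥ ‖y‖ - ‖t • x‖`.
The set defining `c_D` is nonempty in dimension at least two: for `z` independent of a unit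
vector `y`, a point `z + s • y` of least norm on the line `z + ℝ y` is Birkhoff orthogonal to `y`.
-/

namespace BOrth

theorem smul_left {x y : V} (h : BOrth x y) (c : ℝ) : BOrth (c • x) y := by
  intro t
  rcases eq_or_ne c 0 with rfl | hc
  · simp
  calc ‖c • x‖ = ‖c‖ * ‖x‖ := norm_smul c x
    _ ≤ ‖c‖ * ‖x + (c⁻¹ * t) • y‖ := by gcongr; exact h _
    _ = ‖c • x + t • y‖ := by rw [← norm_smul, smul_add, smul_smul, mul_inv_cancel_left₀ hc]

theorem half_norm_le_sine {x y : V} (h : BOrth x y) : ‖y‖ / 2 ≤ sine y x := by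
  refine le_ciInf fun t => ?_
  have h_orth : ‖t • x‖ ≤ ‖t • x + y‖ := by simpa using h.smul_left t 1
  have h_tri : ‖y‖ ≤ ‖y + t • x‖ + ‖t • x‖ := norm_le_add_norm_add y (t • x)
  rw [add_comm] at h_orth
  linarith

end BOrth

theorem sine_le_norm (x y : V) : sine y x ≤ ‖y‖ := by
  have h_bdd : BddBelow (Set.range fun t : ℝ => ‖y + t • x‖) :=
    ⟨0, by rintro _ ⟨t, rfl⟩; positivity⟩
  simpa [sine] using ciInf_le h_bdd 0

theorem exists_bOrth_add_smul (z y : V) : ∃ s : ℝ, BOrth (z + s • y) y := by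
  rcases eq_or_ne y 0 with rfl | hy
  · exact ⟨0, fun t => by simp⟩
  have h_coercive : Filter.Tendsto (fun s : ℝ => ‖z + s • y‖) (Filter.cocompact ℝ)
      Filter.atTop := by
    refine Filter.tendsto_atTop_mono (fun s => ?_) (Filter.tendsto_atTop_add_const_right _ (-‖z‖)
      (tendsto_norm_cocompact_atTop.atTop_mul_const (norm_pos_iff.2 hy)))
    have := norm_sub_norm_le (s • y) (-z)
    rw [sub_neg_eq_add, norm_neg, norm_smul, add_comm] at this
    linarith
  obtain ⟨s, hs⟩ := (by fun_prop : Continuous fun s : ℝ => ‖z + s • y‖).exists_forall_le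
    h_coercive
  exact ⟨s, fun t => by simpa [add_assoc, add_smul] using hs (s + t)⟩

theorem exists_norm_eq_one_bOrth (h : 1 < Module.rank ℝ V) :
    ∃ x y : V, ‖x‖ = 1 ∧ ‖y‖ = 1 ∧ BOrth x y := by
  have : Nontrivial V := rank_pos_iff_nontrivial.1 (zero_lt_one.trans h)
  obtain ⟨y, hy⟩ := exists_norm_eq V zero_le_one
  have hy0 : y ≠ 0 := norm_ne_zero_iff.1 (by simp [hy])
  obtain ⟨z, hyz⟩ := exists_linearIndependent_pair_of_one_lt_rank h hy0
  obtain ⟨s, hs⟩ := exists_bOrth_add_smul z y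
  have hx0 : z + s • y ≠ 0 := fun h0 =>
    one_ne_zero (LinearIndependent.pair_iff.1 hyz s 1 (by rw [one_smul, add_comm, h0])).2
  exact ⟨_, y, norm_smul_inv_norm hx0, hy, hs.smul_left _⟩

theorem cD_bounds (hV : finrank ℝ V = 2) : 1 / 2 ≤ cD V ∧ cD V ≤ 1 := by
  obtain ⟨x, y, hx, hy, hxy⟩ :=
    exists_norm_eq_one_bOrth (one_lt_rank_of_one_lt_finrank (by omega : 1 < finrank ℝ V))
  have h_lower : ∀ r ∈ {r : ℝ | ∃ x y : V, ‖x‖ = 1 ∧ ‖y‖ = 1 ∧ BOrth x y ∧ r = sine y x},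
      1 / 2 ≤ r := by
    rintro _ ⟨x, y, -, hy, hxy, rfl⟩
    simpa [hy] using hxy.half_norm_le_sine
  exact ⟨le_csInf ⟨_, x, y, hx, hy, hxy, rfl⟩ h_lower,
    csInf_le_of_le ⟨1 / 2, h_lower⟩ ⟨x, y, hx, hy, hxy, rfl⟩ (hy ▸ sine_le_norm x y)⟩
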